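/- arXiv:1012.2323 — 4 statements merged into one kernel-verified Lean document; each statement's English description precedes it below -/
import Mathlib

section
/- Let H : ℝ^{2m} → ℝ be continuously differentiable, J the canonical skew-symmetric matrix [[0, I_m],[-I_m, 0]], h > 0, and let σ : [t_0, t_0+h] → ℝ^{2m} be a polynomial (in each coordinate) with σ(t_0) = y_0 satisfying σ'(t_0+τh) = J Σ_{j=0}^{s-1} P_j(τ) ∫_0^1 P_j(c) ∇H(σ(t_0+ch)) dc for all τ ∈ [0,1], where {P_j} are L^2[0,1]-orthonormal polynomials. Then H(σ(t_0+h)) = H(y_0). -/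
/-!
Along `τ ↦ σ (t0 + τ * h)` the chain rule gives
`d/dτ H = h * (f τ ⬝ᵥ J *ᵥ ∑ j, P j τ • γ j)` with `f c = ∇H (σ (t0 + c * h))` and
`γ j = ∫₀¹ P j • f`. Integrating over `[0, 1]`, the factor `P j τ • f τ` integrates back to `γ j`,
so the change of `H` is `h * ∑ j, γ j ⬝ᵥ J *ᵥ γ j`, which vanishes because `J` is skew-symmetric.
-/

open scoped Matrix
open Matrix MeasureTheory Set intervalIntegral

theorem Matrix.dotProduct_mulVec_self_eq_zero_of_transpose_eq_neg {R ι : Type*} [CommRing R]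
    [IsAddTorsionFree R] [Fintype ι] {J : Matrix ι ι R} (hJ : Jᵀ = -J) (v : ι → R) :
    v ⬝ᵥ J *ᵥ v = 0 := by
  refine self_eq_neg.mp ?_
  conv_lhs => rw [dotProduct_mulVec, ← mulVec_transpose, hJ, neg_mulVec, neg_dotProduct,
    dotProduct_comm]

theorem Matrix.dotProduct_mulVec_sum_smul {R ι κ : Type*} [CommRing R] [Fintype ι]
    (J : Matrix ι ι R) (v : ι → R) (t : Finset κ) (c : κ → R) (w : κ → ι → R) :
    v ⬝ᵥ J *ᵥ ∑ j ∈ t, c j • w j = ∑ j ∈ t, (c j • v) ⬝ᵥ J *ᵥ w j := by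
  simp only [mulVec_sum, dotProduct_sum, mulVec_smul, dotProduct_smul, smul_dotProduct]

theorem Matrix.transpose_reindex_fromBlocks_zero_one_neg_one_zero {R l n : Type*} [CommRing R]
    [DecidableEq l] (e : l ⊕ l ≃ n) :
    ((fromBlocks 0 1 (-1) 0 : Matrix (l ⊕ l) (l ⊕ l) R).reindex e e)ᵀ =
      -(fromBlocks 0 1 (-1) 0 : Matrix (l ⊕ l) (l ⊕ l) R).reindex e e := by
  have hblocks : (fromBlocks 0 1 (-1) 0 : Matrix (l ⊕ l) (l ⊕ l) R)ᵀ = -fromBlocks 0 1 (-1) 0 := by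
    rw [fromBlocks_transpose, fromBlocks_neg]
    simp
  rw [transpose_reindex, hblocks]
  rfl

section IntervalIntegral

variable {ι : Type*} [Fintype ι] {f : ℝ → ι → ℝ} {a b : ℝ} {μ : Measure ℝ}

theorem IntervalIntegrable.dotProduct_const (hf : IntervalIntegrable f μ a b) (w : ι → ℝ) :
    IntervalIntegrable (fun x => f x ⬝ᵥ w) μ a b :=
  let L := ((dotProductBilin ℝ ℝ).flip w).toContinuousLinearMap
  ⟨L.integrable_comp hf.1, L.integrable_comp hf.2⟩

theorem intervalIntegral.integral_dotProduct_const (hf : IntervalIntegrable f μ a b)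
    (w : ι → ℝ) : ∫ x in a..b, f x ⬝ᵥ w ∂μ = (∫ x in a..b, f x ∂μ) ⬝ᵥ w :=
  ((dotProductBilin ℝ ℝ).flip w).toContinuousLinearMap.intervalIntegral_comp_comm hf

end IntervalIntegral

section TruncatedExpansion

variable {ι κ : Type*} [Fintype ι] {f : ℝ → ι → ℝ} {P : κ → ℝ → ℝ} {t : Finset κ} {a b : ℝ}

theorem intervalIntegrable_dotProduct_mulVec_sum_smul
    (hPf : ∀ j ∈ t, IntervalIntegrable (fun c => P j c • f c) volume a b)
    (J : Matrix ι ι ℝ) (w : κ → ι → ℝ) :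
    IntervalIntegrable (fun τ => f τ ⬝ᵥ J *ᵥ ∑ j ∈ t, P j τ • w j) volume a b := by
  simp only [dotProduct_mulVec_sum_smul]
  simpa only [Finset.sum_fn] using
    IntervalIntegrable.sum t fun j hj => (hPf j hj).dotProduct_const _

theorem integral_dotProduct_mulVec_sum_smul_integral_eq_zero {J : Matrix ι ι ℝ} (hJ : Jᵀ = -J)
    (hPf : ∀ j ∈ t, IntervalIntegrable (fun c => P j c • f c) volume a b) :
    ∫ τ in a..b, f τ ⬝ᵥ J *ᵥ ∑ j ∈ t, P j τ • ∫ c in a..b, P j c • f c = 0 := by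
  simp only [dotProduct_mulVec_sum_smul]
  rw [integral_finsetSum fun j hj => (hPf j hj).dotProduct_const _]
  refine Finset.sum_eq_zero fun j hj => ?_
  rw [integral_dotProduct_const (hPf j hj), dotProduct_mulVec_self_eq_zero_of_transpose_eq_neg hJ]

end TruncatedExpansion

theorem HasLineDerivAt.fderiv_apply_eq {E F : Type*} [NormedAddCommGroup E] [NormedSpace ℝ E]
    [NormedAddCommGroup F] [NormedSpace ℝ F] {H : E → F} {H' : F} {y v : E}
    (hH : DifferentiableAt ℝ H y) (hg : HasLineDerivAt ℝ H H' y v) : fderiv ℝ H y v = H' :=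
  (hH.hasFDerivAt.hasLineDerivAt v).unique hg

section Gradient

variable {ι : Type*} [Fintype ι] {H : (ι → ℝ) → ℝ} {gH : (ι → ℝ) → ι → ℝ}

theorem continuous_of_hasLineDerivAt_dotProduct (hH : ContDiff ℝ 1 H)
    (hg : ∀ y v, HasLineDerivAt ℝ H (gH y ⬝ᵥ v) y v) : Continuous gH := by
  classical
  refine continuous_pi fun i => ?_
  have hgi : (fun y => gH y i) = fun y => fderiv ℝ H y (Pi.single i 1) := by
    ext y
    rw [(hg y _).fderiv_apply_eq (hH.differentiable one_ne_zero y),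
      dotProduct_single, mul_one]
  rw [hgi]
  exact (hH.continuous_fderiv one_ne_zero).clm_apply continuous_const

theorem HasDerivAt.comp_of_hasLineDerivAt_dotProduct (hH : Differentiable ℝ H)
    (hg : ∀ y v, HasLineDerivAt ℝ H (gH y ⬝ᵥ v) y v) {γ : ℝ → ι → ℝ} {γ' : ι → ℝ} {τ : ℝ}
    (hγ : HasDerivAt γ γ' τ) : HasDerivAt (fun τ => H (γ τ)) (gH (γ τ) ⬝ᵥ γ') τ := by
  rw [← (hg _ _).fderiv_apply_eq (hH _)]
  exact (hH _).hasFDerivAt.comp_hasDerivAt τ hγ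

end Gradient

theorem stmt1_general (m s : ℕ) (t0 h : ℝ)
    (H : (Fin (2*m) → ℝ) → ℝ) (gH : (Fin (2*m) → ℝ) → (Fin (2*m) → ℝ))
    (hH1 : ContDiff ℝ 1 H)
    (hg : ∀ y v : Fin (2*m) → ℝ,
      HasDerivAt (fun r : ℝ => H (y + r • v)) (gH y ⬝ᵥ v) 0)
    (J : Matrix (Fin (2*m)) (Fin (2*m)) ℝ)
    (hJ : J = (Matrix.fromBlocks (0 : Matrix (Fin m) (Fin m) ℝ) (1 : Matrix (Fin m) (Fin m) ℝ)
        (-(1 : Matrix (Fin m) (Fin m) ℝ)) 0).reindex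
        (finSumFinEquiv.trans (finCongr (two_mul m).symm))
        (finSumFinEquiv.trans (finCongr (two_mul m).symm)))
    (P : ℕ → ℝ → ℝ)
    (hPpoly : ∀ j, ∃ p : Polynomial ℝ, ∀ x, P j x = p.eval x)
    (σ : ℝ → (Fin (2*m) → ℝ)) (y0 : Fin (2*m) → ℝ)
    (hσ0 : σ t0 = y0)
    (hode : ∀ τ ∈ Set.Icc (0:ℝ) 1,
      HasDerivAt σ
        (J.mulVec (∑ j ∈ Finset.range s,
          P j τ • ∫ c in (0:ℝ)..1, P j c • gH (σ (t0 + c*h))))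
        (t0 + τ * h)) :
    H (σ (t0 + h)) = H y0 := by
  have hJT : Jᵀ = -J := hJ ▸ transpose_reindex_fromBlocks_zero_one_neg_one_zero _
  have hgH : Continuous gH := continuous_of_hasLineDerivAt_dotProduct hH1 hg
  have hP (j : ℕ) : Continuous (P j) := by
    obtain ⟨p, hp⟩ := hPpoly j
    simpa only [← hp] using p.continuous
  have hline (τ : ℝ) : HasDerivAt (fun τ : ℝ => t0 + τ * h) h τ := by
    simpa using ((hasDerivAt_id τ).mul_const h).const_add t0
  have hf : ContinuousOn (fun c => gH (σ (t0 + c * h))) (Icc 0 1) := fun τ hτ =>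
    (hgH.continuousAt.comp ((hode τ hτ).continuousAt.comp (f := fun c => t0 + c * h)
      (hline τ).continuousAt)).continuousWithinAt
  have hPf (j : ℕ) : IntervalIntegrable (fun c => P j c • gH (σ (t0 + c * h))) volume 0 1 :=
    ((hP j).continuousOn.smul hf).intervalIntegrable_of_Icc zero_le_one
  have hderiv (τ : ℝ) (hτ : τ ∈ uIcc 0 1) : HasDerivAt (fun τ => H (σ (t0 + τ * h)))
      (h * (gH (σ (t0 + τ * h)) ⬝ᵥ J *ᵥ ∑ j ∈ Finset.range s,
        P j τ • ∫ c in (0:ℝ)..1, P j c • gH (σ (t0 + c * h)))) τ := by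
    rw [uIcc_of_le zero_le_one] at hτ
    have := ((hode τ hτ).scomp τ (hline τ)).comp_of_hasLineDerivAt_dotProduct
      (hH1.differentiable one_ne_zero) hg
    rwa [dotProduct_smul, smul_eq_mul] at this
  have hFTC := integral_eq_sub_of_hasDerivAt hderiv
    ((intervalIntegrable_dotProduct_mulVec_sum_smul (fun j _ => hPf j) J _).const_mul h)
  rw [intervalIntegral.integral_const_mul,
    integral_dotProduct_mulVec_sum_smul_integral_eq_zero hJT fun j _ => hPf j] at hFTC
  simp only [mul_zero, one_mul, zero_mul, add_zero, hσ0] at hFTC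
  linarith

/-- The polynomial defined by the truncated Legendre expansion of the Hamiltonian
vector field conserves the Hamiltonian exactly. -/
theorem stmt1 (m s : ℕ) (t0 h : ℝ) (hh : 0 < h)
    (H : (Fin (2*m) → ℝ) → ℝ) (gH : (Fin (2*m) → ℝ) → (Fin (2*m) → ℝ))
    (hH1 : ContDiff ℝ 1 H)
    (hg : ∀ y v : Fin (2*m) → ℝ,
      HasDerivAt (fun r : ℝ => H (y + r • v)) (gH y ⬝ᵥ v) 0)
    (J : Matrix (Fin (2*m)) (Fin (2*m)) ℝ)
    (hJ : J = (Matrix.fromBlocks (0 : Matrix (Fin m) (Fin m) ℝ) (1 : Matrix (Fin m) (Fin m) ℝ)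
        (-(1 : Matrix (Fin m) (Fin m) ℝ)) 0).reindex
        (finSumFinEquiv.trans (finCongr (two_mul m).symm))
        (finSumFinEquiv.trans (finCongr (two_mul m).symm)))
    (P : ℕ → ℝ → ℝ)
    (hPpoly : ∀ j, ∃ p : Polynomial ℝ, ∀ x, P j x = p.eval x)
    (hPorth : ∀ i j, ∫ x in (0:ℝ)..1, P i x * P j x = if i = j then 1 else 0)
    (σ : ℝ → (Fin (2*m) → ℝ)) (y0 : Fin (2*m) → ℝ)
    (hσpoly : ∀ i : Fin (2*m), ∃ p : Polynomial ℝ, ∀ t, σ t i = p.eval t)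
    (hσ0 : σ t0 = y0)
    (hode : ∀ τ ∈ Set.Icc (0:ℝ) 1,
      HasDerivAt σ
        (J.mulVec (∑ j ∈ Finset.range s,
          P j τ • ∫ c in (0:ℝ)..1, P j c • gH (σ (t0 + c*h))))
        (t0 + τ * h)) :
    H (σ (t0 + h)) = H y0 :=
  stmt1_general m s t0 h H gH hH1 hg J hJ P hPpoly σ y0 hσ0 hode
end

section
/- With A = ℐ_{s-1}𝒫_{s-1}^T Ω the HBVM(k,s) Butcher matrix built with Gauss–Legendre nodes (k ≥ s ≥ 1), one has A² = ℐ_{s-1} X_s 𝒫_{s-1}^T Ω, where X_s is the tridiagonal matrix defined by X_s(1,1)=1/2, X_s(j+1,j)=ξ_j=-X_s(j,j+1), ξ_j=1/(2√(4j²-1)). -/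
open scoped Matrix
open Polynomial

noncomputable def xi (j : ℕ) : ℝ := 1 / (2 * Real.sqrt (4 * (j : ℝ) ^ 2 - 1))

noncomputable def XMat (s : ℕ) : Matrix (Fin s) (Fin s) ℝ :=
  Matrix.of fun i j =>
    if (i : ℕ) = 0 ∧ (j : ℕ) = 0 then 1/2
    else if (i : ℕ) = (j : ℕ) + 1 then xi ((j : ℕ) + 1)
    else if (j : ℕ) = (i : ℕ) + 1 then -xi (j : ℕ)
    else 0

namespace HBVM7

noncomputable def ip (p q : Polynomial ℝ) : ℝ := ∫ x in (0:ℝ)..1, (p*q).eval x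

lemma iip (p : Polynomial ℝ) (a b : ℝ) :
    IntervalIntegrable (fun x => p.eval x) MeasureTheory.volume a b :=
  p.continuous.intervalIntegrable a b

lemma ftc (F : Polynomial ℝ) : ∫ x in (0:ℝ)..1, (derivative F).eval x = F.eval 1 - F.eval 0 :=
  intervalIntegral.integral_eq_sub_of_hasDerivAt (fun x _ => F.hasDerivAt x) (iip _ _ _)

lemma ip_comm (p q : Polynomial ℝ) : ip p q = ip q p := by rw [ip, ip, mul_comm]

lemma ip_add_right (p q r : Polynomial ℝ) : ip p (q + r) = ip p q + ip p r := by
  unfold ip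
  rw [mul_add, ← intervalIntegral.integral_add (iip _ _ _) (iip _ _ _)]
  simp only [eval_add]

lemma ip_C_mul (a : ℝ) (p q : Polynomial ℝ) : ip p (C a * q) = a * ip p q := by
  unfold ip
  rw [← intervalIntegral.integral_const_mul]
  congr 1; funext x; simp; ring

lemma ip_zero (p : Polynomial ℝ) : ip p 0 = 0 := by simp [ip]

noncomputable def anti (p : Polynomial ℝ) : Polynomial ℝ :=
  ∑ n ∈ Finset.range (p.natDegree + 1), C (p.coeff n / (n+1)) * X^(n+1)

lemma anti_coeff_zero (p : Polynomial ℝ) : (anti p).coeff 0 = 0 := by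
  simp [anti, finset_sum_coeff, coeff_C_mul, coeff_X_pow]

lemma anti_coeff_succ (p : Polynomial ℝ) (t : ℕ) :
    (anti p).coeff (t+1) = p.coeff t / (t+1) := by
  unfold anti
  rw [finset_sum_coeff]
  simp only [coeff_C_mul, coeff_X_pow, mul_ite, mul_one, mul_zero, add_left_inj]
  rw [Finset.sum_ite_eq (Finset.range (p.natDegree + 1)) t (fun n => p.coeff n / (n+1))]
  split
  · rfl
  · next h =>
    rw [coeff_eq_zero_of_natDegree_lt, zero_div]
    simpa using h

lemma anti_eval_zero (p : Polynomial ℝ) : (anti p).eval 0 = 0 := by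
  simp [anti, eval_finset_sum]

lemma deriv_anti (p : Polynomial ℝ) : derivative (anti p) = p := by
  unfold anti
  rw [map_sum]
  rw [Finset.sum_congr rfl (fun n _ => ?_), ← p.as_sum_range' _ (lt_add_one _)]
  rw [derivative_C_mul, derivative_X_pow, ← C_mul_X_pow_eq_monomial]
  push_cast
  rw [← mul_assoc, ← C_mul]
  congr 2
  field_simp

lemma integ_eq (p : Polynomial ℝ) (t : ℝ) :
    (∫ x in (0:ℝ)..t, p.eval x) = (anti p).eval t := by
  have h : ∀ x ∈ Set.uIcc (0:ℝ) t, HasDerivAt (fun y => (anti p).eval y) (p.eval x) x := by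
    intro x _
    have := (anti p).hasDerivAt x
    rwa [deriv_anti] at this
  rw [intervalIntegral.integral_eq_sub_of_hasDerivAt h (iip _ _ _), anti_eval_zero, sub_zero]

lemma degree_anti_lt (p : Polynomial ℝ) : (anti p).degree < ((p.natDegree + 2 : ℕ) : WithBot ℕ) := by
  rw [degree_lt_iff_coeff_zero]
  intro m hm
  obtain ⟨t, rfl⟩ : ∃ t, m = t + 1 := ⟨m - 1, by omega⟩
  rw [anti_coeff_succ, coeff_eq_zero_of_natDegree_lt (by omega), zero_div]

lemma natDegree_anti_le (p : Polynomial ℝ) : (anti p).natDegree ≤ p.natDegree + 1 := by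
  rw [natDegree_le_iff_degree_le, degree_le_iff_coeff_zero]
  intro m hm
  have hm' : p.natDegree + 1 < m := by exact_mod_cast hm
  obtain ⟨t, rfl⟩ : ∃ t, m = t + 1 := ⟨m - 1, by omega⟩
  rw [anti_coeff_succ, coeff_eq_zero_of_natDegree_lt (by omega), zero_div]

lemma ip_def (p q : Polynomial ℝ) : (∫ x in (0:ℝ)..1, (p*q).eval x) = ip p q := rfl

lemma integ_add (p q : Polynomial ℝ) : ∫ x in (0:ℝ)..1, (p+q).eval x
    = (∫ x in (0:ℝ)..1, p.eval x) + ∫ x in (0:ℝ)..1, q.eval x := by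
  simp only [eval_add]
  exact intervalIntegral.integral_add (iip _ _ _) (iip _ _ _)

lemma ip_sub_right (p q r : Polynomial ℝ) : ip p (q - r) = ip p q - ip p r := by
  have h : ip p q = ip p (q - r) + ip p r := by rw [← ip_add_right]; ring_nf
  linarith

section
variable (P : ℕ → Polynomial ℝ) (hdeg : ∀ j, (P j).degree = j)
  (hlead : ∀ j, 0 < (P j).leadingCoeff)
  (horth : ∀ i j, ip (P i) (P j) = if i = j then 1 else 0)
include hdeg hlead horth
set_option linter.unusedSectionVars false

lemma Pne (j : ℕ) : P j ≠ 0 := by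
  intro h
  have := hdeg j
  rw [h, degree_zero] at this
  exact (by simp : ((⊥ : WithBot ℕ) ≠ (j : WithBot ℕ))) this

lemma Pnd (j : ℕ) : (P j).natDegree = j := natDegree_eq_of_degree_eq_some (hdeg j)

lemma Pcoeff (j : ℕ) : (P j).coeff j = (P j).leadingCoeff := by
  rw [leadingCoeff, Pnd P hdeg hlead horth]

lemma decomp (n : ℕ) (q : Polynomial ℝ) (hq : q.degree < ((n+1 : ℕ) : WithBot ℕ)) :
    ∃ r : Polynomial ℝ, r.degree < ((n : ℕ) : WithBot ℕ) ∧
      q = C (q.coeff n / (P n).leadingCoeff) * P n + r := by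
  refine ⟨q - C (q.coeff n / (P n).leadingCoeff) * P n, ?_, by ring⟩
  rw [degree_lt_iff_coeff_zero]
  intro m hm
  rw [coeff_sub, coeff_C_mul]
  rcases eq_or_lt_of_le hm with rfl | h
  · rw [Pcoeff P hdeg hlead horth, div_mul_cancel₀ _ (ne_of_gt (hlead n)), sub_self]
  · have h1 : q.coeff m = 0 :=
      coeff_eq_zero_of_degree_lt (lt_of_lt_of_le hq (by exact_mod_cast Nat.succ_le_of_lt h))
    have h2 : (P n).coeff m = 0 :=
      coeff_eq_zero_of_natDegree_lt (by rw [Pnd P hdeg hlead horth]; omega)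
    rw [h1, h2, mul_zero, sub_self]

lemma orth_deg : ∀ (n : ℕ) (q : Polynomial ℝ), q.degree < ((n : ℕ) : WithBot ℕ) →
    ∀ i, n ≤ i → ip (P i) q = 0 := by
  intro n
  induction n with
  | zero =>
    intro q hq i _
    have : q = 0 := by
      rw [← degree_eq_bot]
      exact Nat.WithBot.lt_zero_iff.mp (by exact_mod_cast hq)
    rw [this, ip_zero]
  | succ n ih =>
    intro q hq i hi
    obtain ⟨r, hr, hqr⟩ := decomp P hdeg hlead horth n q (by exact_mod_cast hq)
    rw [hqr, ip_add_right, ip_C_mul, horth, if_neg (by omega), ih r hr i (by omega)]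
    ring

lemma iptop (i : ℕ) (q : Polynomial ℝ) (hq : q.degree < ((i+1 : ℕ) : WithBot ℕ)) :
    ip (P i) q = q.coeff i / (P i).leadingCoeff := by
  obtain ⟨r, hr, hqr⟩ := decomp P hdeg hlead horth i q hq
  conv_lhs => rw [hqr]
  rw [ip_add_right, ip_C_mul, horth, if_pos rfl,
    orth_deg P hdeg hlead horth i r hr i le_rfl]
  ring

lemma P0 : P 0 = 1 := by
  have h0 : P 0 = C ((P 0).coeff 0) := eq_C_of_degree_le_zero (by rw [hdeg 0]; simp)
  set a := (P 0).coeff 0 with ha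
  have hip : ip (P 0) (P 0) = a ^ 2 := by
    rw [ip, h0, ← C_mul]
    simp [intervalIntegral.integral_const]
    ring
  have h1 : a ^ 2 = 1 := by rw [← hip, horth, if_pos rfl]
  have hpos : 0 < a := by
    have h2 := hlead 0
    rw [← Pcoeff P hdeg hlead horth 0] at h2
    exact h2
  have : a = 1 := by nlinarith
  rw [h0, this, C_1]

lemma Aone (i : ℕ) : (anti (P i)).eval 1 = if i = 0 then 1 else 0 := by
  rw [← integ_eq]
  have : (∫ x in (0:ℝ)..1, (P i).eval x) = ip (P i) (P 0) := by
    rw [P0 P hdeg hlead horth, ← ip_def, mul_one]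
  rw [this, horth]

lemma gsum (i j : ℕ) : ip (P i) (anti (P j)) + ip (P j) (anti (P i))
    = (if i = 0 then 1 else 0) * (if j = 0 then 1 else 0) := by
  have hd : derivative (anti (P i) * anti (P j))
      = P i * anti (P j) + P j * anti (P i) := by
    rw [derivative_mul, deriv_anti, deriv_anti]; ring
  have hf := ftc (anti (P i) * anti (P j))
  rw [hd, integ_add, ip_def, ip_def] at hf
  rw [hf, eval_mul, eval_mul, anti_eval_zero, Aone P hdeg hlead horth,
    Aone P hdeg hlead horth]
  ring

lemma degree_anti_P_lt (j : ℕ) :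
    (anti (P j)).degree < (((j + 2 : ℕ)) : WithBot ℕ) := by
  have := degree_anti_lt (P j)
  rwa [Pnd P hdeg hlead horth] at this

lemma gbig (i j : ℕ) (h : j + 1 < i) : ip (P i) (anti (P j)) = 0 :=
  orth_deg P hdeg hlead horth (j+2) _ (degree_anti_P_lt P hdeg hlead horth j) i (by omega)

lemma hpos (j : ℕ) : 0 < ip (P (j+1)) (anti (P j)) := by
  rw [iptop P hdeg hlead horth (j+1) _ (degree_anti_P_lt P hdeg hlead horth j), anti_coeff_succ,
    Pcoeff P hdeg hlead horth]
  have : (0:ℝ) < (j:ℝ) + 1 := by positivity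
  exact div_pos (div_pos (hlead j) this) (hlead (j+1))

-- ip (P j) (X * derivative (P j)) = j
lemma ipXd (j : ℕ) : ip (P j) (X * derivative (P j)) = j := by
  have hdlt : (X * derivative (P j)).degree < (((j+1 : ℕ)) : WithBot ℕ) := by
    by_cases hz : derivative (P j) = 0
    · rw [hz, mul_zero, degree_zero]
      exact WithBot.bot_lt_coe _
    · have hj : (P j).natDegree ≠ 0 := by
        intro h0
        have hj0 : j = 0 := by rw [← Pnd P hdeg hlead horth j, h0]
        subst hj0
        rw [P0 P hdeg hlead horth, derivative_one] at hz
        exact hz rfl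
      have hlt := natDegree_derivative_lt hj
      rw [degree_mul, degree_X, degree_eq_natDegree hz]
      rw [Pnd P hdeg hlead horth] at hlt
      exact_mod_cast (by push_cast; exact_mod_cast (by omega : 1 + (derivative (P j)).natDegree < j + 1))
  rw [iptop P hdeg hlead horth j _ hdlt]
  cases j with
  | zero =>
    have : (X * derivative (P 0)).coeff 0 = 0 := by
      rw [mul_coeff_zero, coeff_X_zero, zero_mul]
    rw [this, zero_div, Nat.cast_zero]
  | succ t =>
    rw [coeff_X_mul, coeff_derivative, Pcoeff P hdeg hlead horth,
      mul_comm, mul_div_assoc, div_self (ne_of_gt (hlead (t+1)))]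
    push_cast
    ring

lemma vsq (j : ℕ) : ((P j).eval 1) ^ 2 = 2 * (j:ℝ) + 1 := by
  have hrw : derivative (X * (P j)^2)
      = (P j) * (P j) + (P j) * (C 2 * (X * derivative (P j))) := by
    rw [derivative_mul, derivative_pow, derivative_X]
    push_cast
    ring
  have hf := ftc (X * (P j)^2)
  rw [hrw, integ_add, ip_def, ip_def, horth, if_pos rfl, ip_C_mul,
    ipXd P hdeg hlead horth] at hf
  simp only [eval_mul, eval_pow, eval_X, anti_eval_zero] at hf
  nlinarith [hf]

lemma wsq (j : ℕ) : ((P j).eval 0) ^ 2 = 2 * (j:ℝ) + 1 := by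
  have hrw : derivative ((X - C 1) * (P j)^2)
      = (P j) * (P j) + ((P j) * (C 2 * (X * derivative (P j)))
          - (P j) * (C 2 * derivative (P j))) := by
    rw [derivative_mul, derivative_pow, derivative_sub, derivative_X, derivative_C]
    simp only [C_1]
    push_cast
    ring
  have hd0 : ip (P j) (C 2 * derivative (P j)) = 0 := by
    rw [ip_C_mul]
    have : (derivative (P j)).degree < ((j:ℕ) : WithBot ℕ) := by
      rw [← hdeg j]
      exact degree_derivative_lt (Pne P hdeg hlead horth j)
    rw [orth_deg P hdeg hlead horth j _ this j le_rfl, mul_zero]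
  have hf := ftc ((X - C 1) * (P j)^2)
  rw [hrw, integ_add] at hf
  have hsplit : (∫ x in (0:ℝ)..1, ((P j) * (C 2 * (X * derivative (P j)))
      - (P j) * (C 2 * derivative (P j))).eval x)
      = ip (P j) (C 2 * (X * derivative (P j))) - ip (P j) (C 2 * derivative (P j)) := by
    rw [← ip_sub_right, ← ip_def, mul_sub]
  rw [hsplit, ip_def, horth, if_pos rfl, hd0, ip_C_mul, ipXd P hdeg hlead horth] at hf
  simp only [eval_mul, eval_pow, eval_sub, eval_X, eval_C] at hf
  nlinarith [hf]

lemma cformula (j : ℕ) : ip (P j) (derivative (P (j+1)))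
    = (P j).eval 1 * (P (j+1)).eval 1 - (P j).eval 0 * (P (j+1)).eval 0 := by
  have hrw : derivative (P j * P (j+1))
      = P (j+1) * derivative (P j) + P j * derivative (P (j+1)) := by
    rw [derivative_mul]; ring
  have h0 : ip (P (j+1)) (derivative (P j)) = 0 := by
    have : (derivative (P j)).degree < ((j:ℕ) : WithBot ℕ) := by
      rw [← hdeg j]
      exact degree_derivative_lt (Pne P hdeg hlead horth j)
    exact orth_deg P hdeg hlead horth j _ this (j+1) (by omega)
  have hf := ftc (P j * P (j+1))
  rw [hrw, integ_add, ip_def, ip_def, h0] at hf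
  simp only [eval_mul] at hf
  linarith [hf]

lemma ip_anti_small (m : ℕ) (hm : m ≠ 0) (r : Polynomial ℝ)
    (hr : (anti r).degree < ((m:ℕ) : WithBot ℕ)) :
    ip (anti (P m)) r = 0 := by
  have hrw : derivative (anti r * anti (P m)) = r * anti (P m) + P m * anti r := by
    rw [derivative_mul, deriv_anti, deriv_anti]; ring
  have hf := ftc (anti r * anti (P m))
  rw [hrw, integ_add, ip_def, ip_def,
    orth_deg P hdeg hlead horth m _ hr m le_rfl] at hf
  simp only [eval_mul, anti_eval_zero, Aone P hdeg hlead horth, if_neg hm] at hf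
  rw [ip_comm]
  linarith [hf]

lemma key (j : ℕ) :
    ip (P j) (derivative (P (j+1))) * ip (P (j+1)) (anti (P j)) = 1 := by
  set m := j + 1 with hm
  have hqdeg : (derivative (P m)).degree < (((j+1 : ℕ)) : WithBot ℕ) := by
    rw [← hdeg m]
    exact degree_derivative_lt (Pne P hdeg hlead horth m)
  obtain ⟨r, hr, hqr⟩ := decomp P hdeg hlead horth j (derivative (P m)) hqdeg
  have hc : ip (P j) (derivative (P m))
      = (derivative (P m)).coeff j / (P j).leadingCoeff :=
    iptop P hdeg hlead horth j _ hqdeg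
  have hT : ip (anti (P m)) (derivative (P m)) = -1 := by
    have hrw : derivative (anti (P m) * P m) = P m * P m + anti (P m) * derivative (P m) := by
      rw [derivative_mul, deriv_anti]
    have hf := ftc (anti (P m) * P m)
    rw [hrw, integ_add, ip_def, ip_def, horth, if_pos rfl] at hf
    simp only [eval_mul, anti_eval_zero, Aone P hdeg hlead horth,
      if_neg (by omega : m ≠ 0), zero_mul, mul_zero, sub_zero] at hf
    linarith [hf]
  have hr2 : (anti r).degree < ((m:ℕ) : WithBot ℕ) := by
    rw [degree_lt_iff_coeff_zero]
    intro t ht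
    obtain ⟨u, rfl⟩ : ∃ u, t = u + 1 := ⟨t - 1, by omega⟩
    rw [anti_coeff_succ,
      coeff_eq_zero_of_degree_lt (lt_of_lt_of_le hr (by exact_mod_cast (by omega : j ≤ u))),
      zero_div]
  have hsplit : ip (anti (P m)) (derivative (P m))
      = ip (P j) (derivative (P m)) * ip (P j) (anti (P m)) := by
    conv_lhs => rw [hqr]
    rw [ip_add_right, ip_C_mul, ip_anti_small P hdeg hlead horth m (by omega) r hr2,
      add_zero, ip_comm (anti (P m)) (P j), hc]
  rw [hsplit] at hT
  have hgs := gsum P hdeg hlead horth j m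
  rw [if_neg (by omega : ¬ m = 0), mul_zero] at hgs
  linear_combination (-1 : ℝ) * hT + (ip (P j) (derivative (P m))) * hgs

lemma hval (j : ℕ) : ip (P (j+1)) (anti (P j)) = xi (j+1) := by
  have hhpos := hpos P hdeg hlead horth j
  have hck := key P hdeg hlead horth j
  have hcf := cformula P hdeg hlead horth j
  have hv0 := vsq P hdeg hlead horth j
  have hv1 := vsq P hdeg hlead horth (j+1)
  have hw0 := wsq P hdeg hlead horth j
  have hw1 := wsq P hdeg hlead horth (j+1)
  push_cast at hv1 hw1
  set h := ip (P (j+1)) (anti (P j))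
  set c := ip (P j) (derivative (P (j+1)))
  set v0 := (P j).eval 1
  set v1 := (P (j+1)).eval 1
  set w0 := (P j).eval 0
  set w1 := (P (j+1)).eval 0
  have hcpos : 0 < c := by nlinarith [hck, hhpos]
  set S := Real.sqrt ((2*(j:ℝ)+1) * (2*(j:ℝ)+3)) with hS
  have hSpos : 0 < S := Real.sqrt_pos.mpr (by positivity)
  have hS2 : S^2 = (2*(j:ℝ)+1)*(2*(j:ℝ)+3) := Real.sq_sqrt (by positivity)
  have ha2 : (v0*v1)^2 = (2*(j:ℝ)+1)*(2*(j:ℝ)+3) := by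
    rw [mul_pow, hv0, hv1]; ring
  have hd2 : (w0*w1)^2 = (2*(j:ℝ)+1)*(2*(j:ℝ)+3) := by
    rw [mul_pow, hw0, hw1]; ring
  have hzero : (v0*v1*(w0*w1) - S^2) * (v0*v1*(w0*w1) + S^2) = 0 := by
    linear_combination ((w0*w1)^2) * ha2 + ((2*(j:ℝ)+1)*(2*(j:ℝ)+3)) * hd2
      - (S^2 + (2*(j:ℝ)+1)*(2*(j:ℝ)+3)) * hS2
  rcases mul_eq_zero.mp hzero with hcase | hcase
  · exfalso
    have hadK : v0*v1*(w0*w1) = (2*(j:ℝ)+1)*(2*(j:ℝ)+3) := by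
      have := sub_eq_zero.mp hcase
      rw [this, hS2]
    have hc2 : c^2 = 0 := by
      linear_combination (c + (v0*v1 - w0*w1)) * hcf + ha2 + hd2 - 2 * hadK
    nlinarith [hcpos, hc2]
  · have hadK : v0*v1*(w0*w1) = -((2*(j:ℝ)+1)*(2*(j:ℝ)+3)) := by
      have := eq_neg_of_add_eq_zero_left hcase
      rw [this, hS2]
    have hc2 : c^2 = (2*S)^2 := by
      linear_combination (c + (v0*v1 - w0*w1)) * hcf + ha2 + hd2 - 2 * hadK - 4 * hS2
    have hc2S : c = 2*S := by
      rcases mul_eq_zero.mp (show (c - 2*S)*(c + 2*S) = 0 by linear_combination hc2) with h1 | h1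
      · linarith [sub_eq_zero.mp h1]
      · nlinarith [hSpos, hcpos, eq_neg_of_add_eq_zero_left h1]
    have hxieq : xi (j+1) = 1/(2*S) := by
      rw [xi, hS, show (4*(((j+1:ℕ)):ℝ)^2 - 1) = (2*(j:ℝ)+1)*(2*(j:ℝ)+3) by push_cast; ring]
    rw [hxieq, eq_div_iff (by positivity)]
    rw [hc2S] at hck
    linarith [hck]

lemma gval (i j : ℕ) : ip (P i) (anti (P j)) =
    (if i = 0 ∧ j = 0 then (1:ℝ)/2 else if i = j+1 then xi (j+1)
     else if j = i+1 then -xi j else 0) := by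
  by_cases h00 : i = 0 ∧ j = 0
  · obtain ⟨rfl, rfl⟩ := h00
    rw [if_pos ⟨rfl, rfl⟩]
    have hg := gsum P hdeg hlead horth 0 0
    rw [if_pos rfl] at hg
    linarith
  rw [if_neg h00]
  by_cases hij : i = j + 1
  · subst hij
    rw [if_pos rfl]
    exact hval P hdeg hlead horth j
  rw [if_neg hij]
  by_cases hji : j = i + 1
  · subst hji
    rw [if_pos rfl]
    have hg := gsum P hdeg hlead horth i (i+1)
    rw [hval P hdeg hlead horth i, if_neg (by omega : ¬ i + 1 = 0), mul_zero] at hg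
    linarith
  rw [if_neg hji]
  by_cases hgt : j + 1 < i
  · exact gbig P hdeg hlead horth i j hgt
  by_cases hlt : i + 1 < j
  · have hg := gsum P hdeg hlead horth i j
    rw [gbig P hdeg hlead horth j i hlt, if_neg (by omega : ¬ j = 0), mul_zero] at hg
    linarith
  · have hii : i = j := by omega
    subst hii
    have hi0 : ¬ i = 0 := fun h => h00 ⟨h, h⟩
    have hg := gsum P hdeg hlead horth i i
    rw [if_neg hi0, zero_mul] at hg
    linarith

end
end HBVM7

/-- `A² = ℐ_{s-1} Xₛ 𝒫_{s-1}ᵀ Ω` for the HBVM(k,s) Butcher matrix `A = ℐ_{s-1} 𝒫_{s-1}ᵀ Ω`. -/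
theorem stmt7 (k s : ℕ) (hks : s ≤ k) (hs : 1 ≤ s)
    (c b : Fin k → ℝ)
    (hc : ∀ i, c i ∈ Set.Icc (0:ℝ) 1)
    (hquad : ∀ p : Polynomial ℝ, p.natDegree ≤ 2*k - 1 →
      ∑ i, b i * p.eval (c i) = ∫ x in (0:ℝ)..1, p.eval x)
    (P : ℕ → Polynomial ℝ)
    (hdeg : ∀ j, (P j).degree = j)
    (hlead : ∀ j, 0 < (P j).leadingCoeff)
    (horth : ∀ i j, ∫ x in (0:ℝ)..1, (P i).eval x * (P j).eval x
      = if i = j then 1 else 0)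
    (A : Matrix (Fin k) (Fin k) ℝ)
    (hA : A = (Matrix.of fun (i : Fin k) (j : Fin s) => (∫ x in (0:ℝ)..(c i), (P (j : ℕ)).eval x))
      * (Matrix.of fun (i : Fin k) (j : Fin s) => (P (j : ℕ)).eval (c i))ᵀ
      * Matrix.diagonal b) :
    A ^ 2 = (Matrix.of fun (i : Fin k) (j : Fin s) => (∫ x in (0:ℝ)..(c i), (P (j : ℕ)).eval x))
      * XMat s
      * (Matrix.of fun (i : Fin k) (j : Fin s) => (P (j : ℕ)).eval (c i))ᵀ
      * Matrix.diagonal b := by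
  have horth' : ∀ i j, HBVM7.ip (P i) (P j) = if i = j then 1 else 0 := by
    intro i j
    rw [← horth i j, HBVM7.ip]
    simp only [Polynomial.eval_mul]
  set Im := (Matrix.of fun (i : Fin k) (j : Fin s) => (∫ x in (0:ℝ)..(c i), (P (j : ℕ)).eval x)) with hIm
  set Pm := (Matrix.of fun (i : Fin k) (j : Fin s) => (P (j : ℕ)).eval (c i)) with hPm
  set D := Matrix.diagonal b with hD
  have keymat : Pmᵀ * D * Im = XMat s := by
    ext i j
    rw [Matrix.mul_apply]
    have hentry : ∀ l : Fin k, (Pmᵀ * D) i l * Im l j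
        = b l * (P (i:ℕ) * HBVM7.anti (P (j:ℕ))).eval (c l) := by
      intro l
      rw [Matrix.mul_diagonal, Matrix.transpose_apply, hIm, hPm]
      simp only [Matrix.of_apply]
      rw [HBVM7.integ_eq, Polynomial.eval_mul]
      ring
    rw [Finset.sum_congr rfl (fun l _ => hentry l)]
    have hdegq : (P (i:ℕ) * HBVM7.anti (P (j:ℕ))).natDegree ≤ 2*k - 1 := by
      refine le_trans (Polynomial.natDegree_mul_le) ?_
      have h1 : (P (i:ℕ)).natDegree = (i:ℕ) := HBVM7.Pnd P hdeg hlead horth' (i:ℕ)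
      have h2 : (HBVM7.anti (P (j:ℕ))).natDegree ≤ (j:ℕ) + 1 := by
        have := HBVM7.natDegree_anti_le (P (j:ℕ))
        rwa [HBVM7.Pnd P hdeg hlead horth' (j:ℕ)] at this
      have hi := i.isLt
      have hj := j.isLt
      omega
    rw [hquad _ hdegq, HBVM7.ip_def, HBVM7.gval P hdeg hlead horth' (i:ℕ) (j:ℕ)]
    simp only [XMat, Matrix.of_apply]
  have h2 : (Im * Pmᵀ * D) ^ 2 = Im * (Pmᵀ * D * Im) * Pmᵀ * D := by
    rw [pow_two]
    simp only [Matrix.mul_assoc]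
  rw [hA, h2, keymat]
end

section
/- The tridiagonal matrix X_s ∈ ℝ^{s×s} with X_s(1,1) = 1/2, X_s(j+1,j) = ξ_j, X_s(j,j+1) = -ξ_j (ξ_j = 1/(2√(4j²-1)) > 0, 1 ≤ j ≤ s-1), and all other entries zero, is nonsingular for every s ≥ 1. -/
open Matrix

lemma xi_pos (j : ℕ) (hj : 1 ≤ j) : 0 < xi j := by
  unfold xi
  have h1 : (1 : ℝ) ≤ (j : ℝ) := by exact_mod_cast hj
  have h2 : (0 : ℝ) < 4 * (j : ℝ) ^ 2 - 1 := by nlinarith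
  have h3 : 0 < Real.sqrt (4 * (j : ℝ) ^ 2 - 1) := Real.sqrt_pos.mpr h2
  positivity

/-- The skew-symmetric part. -/
noncomputable def SMat (s : ℕ) : Matrix (Fin s) (Fin s) ℝ :=
  Matrix.of fun i j =>
    if (i : ℕ) = (j : ℕ) + 1 then xi ((j : ℕ) + 1)
    else if (j : ℕ) = (i : ℕ) + 1 then -xi (j : ℕ)
    else 0

/-- The rank-one part. -/
noncomputable def EMat (s : ℕ) : Matrix (Fin s) (Fin s) ℝ :=
  Matrix.of fun i j => if (i : ℕ) = 0 ∧ (j : ℕ) = 0 then (1/2 : ℝ) else 0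

lemma XMat_zero {s : ℕ} (i j : Fin s) (h1 : ¬((i : ℕ) = 0 ∧ (j : ℕ) = 0))
    (h2 : (i : ℕ) ≠ (j : ℕ) + 1) (h3 : (j : ℕ) ≠ (i : ℕ) + 1) : XMat s i j = 0 := by
  simp only [XMat, Matrix.of_apply, if_neg h1, if_neg h2, if_neg h3]

lemma XMat_sub {s : ℕ} (i j : Fin s) (h : (i : ℕ) = (j : ℕ) + 1) :
    XMat s i j = xi ((j : ℕ) + 1) := by
  simp only [XMat, Matrix.of_apply]
  rw [if_neg (by omega), if_pos h]

lemma XMat_super {s : ℕ} (i j : Fin s) (h : (j : ℕ) = (i : ℕ) + 1) :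
    XMat s i j = -xi (j : ℕ) := by
  simp only [XMat, Matrix.of_apply]
  rw [if_neg (by omega), if_neg (by omega), if_pos h]

lemma XMat_diag {s : ℕ} (i j : Fin s) (hi : (i : ℕ) = 0) (hj : (j : ℕ) = 0) :
    XMat s i j = 1/2 := by
  simp only [XMat, Matrix.of_apply, if_pos (And.intro hi hj)]

lemma XMat_eq (s : ℕ) : XMat s = EMat s + SMat s := by
  ext i j
  simp only [XMat, EMat, SMat, Matrix.add_apply, Matrix.of_apply]
  split_ifs <;> first | omega | ring

lemma SMat_skew (s : ℕ) : (SMat s)ᵀ = -(SMat s) := by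
  ext i j
  simp only [SMat, Matrix.transpose_apply, Matrix.neg_apply, Matrix.of_apply]
  by_cases hij : (j : ℕ) = (i : ℕ) + 1
  · rw [if_pos hij, if_neg (by omega), if_pos hij, hij, neg_neg]
  · by_cases hji : (i : ℕ) = (j : ℕ) + 1
    · rw [if_neg hij, if_pos hji, if_pos hji, hji]
    · rw [if_neg hij, if_neg hji, if_neg hji, if_neg hij, neg_zero]

lemma skew_quad (s : ℕ) (v : Fin s → ℝ) :
    dotProduct v ((SMat s).mulVec v) = 0 := by
  have h := Matrix.dotProduct_mulVec v (SMat s) v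
  have h2 : Matrix.vecMul v (SMat s) = -((SMat s).mulVec v) := by
    have h3 := Matrix.vecMul_transpose ((SMat s)ᵀ) v
    rw [Matrix.transpose_transpose] at h3
    rw [h3, SMat_skew, Matrix.neg_mulVec]
  rw [h2, neg_dotProduct] at h
  have hc := dotProduct_comm ((SMat s).mulVec v) v
  linarith

lemma E_quad (s : ℕ) (hs : 1 ≤ s) (v : Fin s → ℝ) :
    dotProduct v ((EMat s).mulVec v) = 1/2 * v ⟨0, hs⟩ * v ⟨0, hs⟩ := by
  simp only [dotProduct, Matrix.mulVec, EMat, Matrix.of_apply]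
  rw [Finset.sum_eq_single (⟨0, hs⟩ : Fin s)]
  · rw [Finset.sum_eq_single (⟨0, hs⟩ : Fin s)]
    · simp only [Fin.val_mk, and_self, if_pos rfl]
      norm_num; ring
    · intro b _ hb
      have hb' : (b : ℕ) ≠ 0 := fun h => hb (Fin.ext h)
      simp [hb']
    · intro h; exact absurd (Finset.mem_univ _) h
  · intro b _ hb
    have hb' : (b : ℕ) ≠ 0 := fun h => hb (Fin.ext h)
    have hz : ∀ j : Fin s,
        (if (b : ℕ) = 0 ∧ (j : ℕ) = 0 then (1/2 : ℝ) else 0) * v j = 0 := by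
      intro j; simp [hb']
    rw [Finset.sum_eq_zero (fun j _ => hz j), mul_zero]
  · intro h; exact absurd (Finset.mem_univ _) h

lemma X_quad (s : ℕ) (hs : 1 ≤ s) (v : Fin s → ℝ) :
    dotProduct v ((XMat s).mulVec v) = 1/2 * v ⟨0, hs⟩ * v ⟨0, hs⟩ := by
  rw [XMat_eq, Matrix.add_mulVec, dotProduct_add, skew_quad, E_quad s hs]
  ring

/-- The tridiagonal Legendre matrix `Xₛ` is nonsingular for every `s ≥ 1`. -/
theorem stmt9 : ∀ s : ℕ, 1 ≤ s → (XMat s).det ≠ 0 := by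
  intro s hs hdet
  obtain ⟨v, hv, hXv⟩ := (Matrix.exists_mulVec_eq_zero_iff).mpr hdet
  -- v 0 = 0 from the quadratic form
  have h0 : v ⟨0, hs⟩ = 0 := by
    have h := X_quad s hs v
    rw [hXv] at h
    simp [dotProduct] at h
    nlinarith [h]
  -- row equations
  have hrow : ∀ j : Fin s, ∑ i, XMat s j i * v i = 0 := by
    intro j
    have := congrFun hXv j
    simpa [Matrix.mulVec, dotProduct] using this
  -- all components vanish by strong induction
  have hall : ∀ k : ℕ, ∀ hk : k < s, v ⟨k, hk⟩ = 0 := by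
    intro k
    induction k using Nat.strong_induction_on with
    | _ k ih =>
      intro hk
      match k, hk with
      | 0, hk => exact h0
      | 1, hk =>
        -- row 0 : (1/2) v 0 - xi 1 * v 1 = 0
        have hr := hrow ⟨0, hs⟩
        have hsum : ∑ i, XMat s ⟨0, hs⟩ i * v i
            = XMat s ⟨0, hs⟩ ⟨0, hs⟩ * v ⟨0, hs⟩
              + XMat s ⟨0, hs⟩ ⟨1, hk⟩ * v ⟨1, hk⟩ := by
          apply Finset.sum_eq_add_of_mem (f := fun i => XMat s ⟨0, hs⟩ i * v i)
            ⟨0, hs⟩ ⟨1, hk⟩ (Finset.mem_univ _) (Finset.mem_univ _)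
          · intro h
            have := congrArg Fin.val h
            simp at this
          · rintro c - ⟨hc1, hc2⟩
            have hcv0 : (c : ℕ) ≠ 0 := fun h => hc1 (Fin.ext h)
            have hcv1 : (c : ℕ) ≠ 1 := fun h => hc2 (Fin.ext h)
            have hX0 : XMat s ⟨0, hs⟩ c = 0 := by
              apply XMat_zero <;> simp only [Fin.val_mk] <;> omega
            rw [hX0, zero_mul]
        rw [hsum] at hr
        have hXd : XMat s ⟨0, hs⟩ ⟨0, hs⟩ = 1/2 := XMat_diag _ _ rfl rfl
        have hX1 : XMat s ⟨0, hs⟩ ⟨1, hk⟩ = -xi 1 := XMat_super _ _ rfl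
        rw [h0, hXd, hX1] at hr
        have hmul : xi 1 * v ⟨1, hk⟩ = 0 := by linarith
        rcases mul_eq_zero.mp hmul with h | h
        · exact absurd h (ne_of_gt (xi_pos 1 le_rfl))
        · exact h
      | (m+2), hk =>
        -- row m+1 : xi (m+1) * v m - xi (m+2) * v (m+2) = 0
        have hm1 : m + 1 < s := by omega
        have hm : m < s := by omega
        have hr := hrow ⟨m+1, hm1⟩
        have hsum : ∑ i, XMat s ⟨m+1, hm1⟩ i * v i
            = XMat s ⟨m+1, hm1⟩ ⟨m, hm⟩ * v ⟨m, hm⟩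
              + XMat s ⟨m+1, hm1⟩ ⟨m+2, hk⟩ * v ⟨m+2, hk⟩ := by
          apply Finset.sum_eq_add_of_mem (f := fun i => XMat s ⟨m+1, hm1⟩ i * v i)
            ⟨m, hm⟩ ⟨m+2, hk⟩ (Finset.mem_univ _) (Finset.mem_univ _)
          · intro h
            have := congrArg Fin.val h
            simp at this
          · rintro c - ⟨hc1, hc2⟩
            have hcv0 : (c : ℕ) ≠ m := fun h => hc1 (Fin.ext h)
            have hcv1 : (c : ℕ) ≠ m + 2 := fun h => hc2 (Fin.ext h)
            have hX0 : XMat s ⟨m+1, hm1⟩ c = 0 := by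
              apply XMat_zero <;> simp only [Fin.val_mk] <;> omega
            rw [hX0, zero_mul]
        rw [hsum] at hr
        have hXa : XMat s ⟨m+1, hm1⟩ ⟨m, hm⟩ = xi (m+1) := XMat_sub _ _ rfl
        have hXb : XMat s ⟨m+1, hm1⟩ ⟨m+2, hk⟩ = -xi (m+2) := XMat_super _ _ rfl
        have hva : v ⟨m, hm⟩ = 0 := ih m (by omega) hm
        rw [hXa, hXb, hva] at hr
        have hmul : xi (m+2) * v ⟨m+2, hk⟩ = 0 := by linarith
        rcases mul_eq_zero.mp hmul with h | h
        · exact absurd h (ne_of_gt (xi_pos (m+2) (by omega)))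
        · exact h
  apply hv
  funext i
  have := hall i.val i.isLt
  simpa using this
end

section
/- All eigenvalues of the matrix X_s (s ≥ 2) have nonnegative real part, and the real part of any eigenvalue λ satisfies Re(λ) ≤ 1/2; more precisely, for any eigenvalue λ with unit eigenvector v ∈ ℂ^s, Re(λ) = |v_1|²/2. -/
open scoped Matrix

lemma XMat_symm (s : ℕ) (i j : Fin s) :
    XMat s i j + XMat s j i = if (i : ℕ) = 0 ∧ (j : ℕ) = 0 then 1 else 0 := by
  simp only [XMat, Matrix.of_apply]
  by_cases h00 : (i : ℕ) = 0 ∧ (j : ℕ) = 0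
  · rw [if_pos h00, if_pos ⟨h00.2, h00.1⟩, if_pos h00]
    norm_num
  · rw [if_neg h00]
    by_cases h1 : (i : ℕ) = (j : ℕ) + 1
    · have h2 : ¬ ((j : ℕ) = (i : ℕ) + 1) := by omega
      have h00' : ¬ ((j : ℕ) = 0 ∧ (i : ℕ) = 0) := by omega
      rw [if_neg h00, if_pos h1, if_neg h00', if_neg h2, if_pos h1, h1]
      ring
    · by_cases h2 : (j : ℕ) = (i : ℕ) + 1
      · have h00' : ¬ ((j : ℕ) = 0 ∧ (i : ℕ) = 0) := by omega
        rw [if_neg h00, if_neg h1, if_pos h2, if_neg h00', if_pos h2, h2]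
        ring
      · have h00' : ¬ ((j : ℕ) = 0 ∧ (i : ℕ) = 0) := fun h => h00 ⟨h.2, h.1⟩
        rw [if_neg h00, if_neg h1, if_neg h2, if_neg h00', if_neg h2, if_neg h1]
        ring

/-- Every eigenvalue `λ` of `Xₛ` (with unit eigenvector `v`) satisfies
`Re λ = |v₁|²/2`, hence `0 ≤ Re λ ≤ 1/2`. -/
theorem stmt11 (s : ℕ) (hs : 2 ≤ s) (lam : ℂ) (v : Fin s → ℂ)
    (hv : ((XMat s).map (Complex.ofReal ·)).mulVec v = lam • v)
    (hunit : ∑ i, Complex.normSq (v i) = 1) :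
    lam.re = Complex.normSq (v ⟨0, by omega⟩) / 2 ∧ 0 ≤ lam.re ∧ lam.re ≤ 1/2 := by
  set z0 : Fin s := ⟨0, by omega⟩ with hz0
  set r : Fin s → Fin s → ℝ := fun i j => ((starRingEnd ℂ) (v i) * v j).re with hr
  have rsymm : ∀ i j, r i j = r j i := by
    intro i j
    simp only [hr, Complex.mul_re]
    simp [Complex.conj_re, Complex.conj_im]
    ring
  have h1 : lam = ∑ i, (starRingEnd ℂ) (v i) * (((XMat s).map (Complex.ofReal ·)).mulVec v i) := by
    rw [hv]
    have key : ∀ i, (starRingEnd ℂ) (v i) * ((lam • v) i) = lam * (Complex.normSq (v i) : ℂ) := by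
      intro i
      rw [Pi.smul_apply, smul_eq_mul]
      have : (starRingEnd ℂ) (v i) * v i = (Complex.normSq (v i) : ℂ) := by
        rw [mul_comm, Complex.mul_conj]
      calc (starRingEnd ℂ) (v i) * (lam * v i) = lam * ((starRingEnd ℂ) (v i) * v i) := by ring
        _ = lam * (Complex.normSq (v i) : ℂ) := by rw [this]
    simp_rw [key, ← Finset.mul_sum]
    have hsum : (∑ i, (Complex.normSq (v i) : ℂ)) = 1 := by exact_mod_cast hunit
    rw [hsum, mul_one]
  have h2 : lam.re = ∑ i, ∑ j, XMat s i j * r i j := by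
    rw [h1, Complex.re_sum]
    refine Finset.sum_congr rfl fun i _ => ?_
    simp only [Matrix.mulVec, dotProduct, Matrix.map_apply, Finset.mul_sum]
    rw [Complex.re_sum]
    refine Finset.sum_congr rfl fun j _ => ?_
    have : (starRingEnd ℂ) (v i) * ((XMat s i j : ℂ) * v j)
        = (XMat s i j : ℂ) * ((starRingEnd ℂ) (v i) * v j) := by ring
    rw [this, Complex.re_ofReal_mul]
  have h3 : lam.re = ∑ i, ∑ j, XMat s j i * r i j := by
    rw [h2, Finset.sum_comm]
    exact Finset.sum_congr rfl fun i _ => Finset.sum_congr rfl fun j _ => by rw [rsymm]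
  have h4 : 2 * lam.re = ∑ i : Fin s, ∑ j : Fin s, (if (i : ℕ) = 0 ∧ (j : ℕ) = 0 then (1:ℝ) else 0) * r i j := by
    calc 2 * lam.re = (∑ i, ∑ j, XMat s i j * r i j) + ∑ i, ∑ j, XMat s j i * r i j := by
          rw [← h2, ← h3]; ring
      _ = ∑ i, ∑ j, (XMat s i j + XMat s j i) * r i j := by
          rw [← Finset.sum_add_distrib]
          exact Finset.sum_congr rfl fun i _ => by
            rw [← Finset.sum_add_distrib]
            exact Finset.sum_congr rfl fun j _ => by ring
      _ = _ := Finset.sum_congr rfl fun i _ => Finset.sum_congr rfl fun j _ => by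
          rw [XMat_symm]
  have h5 : 2 * lam.re = Complex.normSq (v z0) := by
    rw [h4]
    have hite : ∀ i j : Fin s, (if (i : ℕ) = 0 ∧ (j : ℕ) = 0 then (1:ℝ) else 0) * r i j
        = if i = z0 then (if j = z0 then r i j else 0) else 0 := by
      intro i j
      have hi : (i : ℕ) = 0 ↔ i = z0 := ⟨fun h => Fin.ext h, fun h => by rw [h]⟩
      have hj : (j : ℕ) = 0 ↔ j = z0 := ⟨fun h => Fin.ext h, fun h => by rw [h]⟩
      split_ifs with hc ha hb
      · ring
      · exact absurd (hj.mp hc.2) hb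
      · exact absurd (hi.mp hc.1) ha
      · rename_i ha hb
        exact absurd ⟨hi.mpr ha, hj.mpr hb⟩ hc
      · exact zero_mul _
      · exact zero_mul _
    simp_rw [hite]
    have inner : ∀ i : Fin s, (∑ j : Fin s, if i = z0 then (if j = z0 then r i j else 0) else 0)
        = if i = z0 then r i z0 else 0 := by
      intro i
      by_cases h : i = z0
      · simp [h, Finset.sum_ite_eq']
      · simp [h]
    simp_rw [inner]
    rw [Finset.sum_ite_eq' Finset.univ z0, if_pos (Finset.mem_univ z0)]
    show ((starRingEnd ℂ) (v z0) * v z0).re = _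
    rw [mul_comm, Complex.mul_conj, Complex.ofReal_re]
  have hre : lam.re = Complex.normSq (v z0) / 2 := by linarith
  refine ⟨hre, ?_, ?_⟩
  · rw [hre]
    exact div_nonneg (Complex.normSq_nonneg _) (by norm_num)
  · rw [hre]
    have hle : Complex.normSq (v z0) ≤ ∑ i, Complex.normSq (v i) :=
      Finset.single_le_sum (fun i _ => Complex.normSq_nonneg (v i)) (Finset.mem_univ z0)
    rw [hunit] at hle
    linarith
end
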